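/- arXiv:0909.4058 — 2 statements merged into one kernel-verified Lean document; each statement's English description precedes it below -/
import Mathlib

section
/- Let (e, V) be a full projective embedding of a point-line geometry Γ and let H be a maximal hyperplane of Γ. Then the span ⟨e(H)⟩ in V either equals V or is a linear hyperplane of V; and in the latter case e(H) = e(P) ∩ ⟨e(H)⟩, i.e., a point p lies in H if and only if e(p) is contained in ⟨e(H)⟩. -/
lemma aux_closed {P F V : Type*} [Field F] [AddCommGroup V] [Module F V]
    {L : Set (Set P)} {e : P → Submodule F V}
    (e_inj : Function.Injective e)
    (e_rank : ∀ p : P, ∃ v : V, v ≠ 0 ∧ e p = Submodule.span F {v})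
    (e_lines : ∀ l ∈ L, ∃ W : Submodule F V, Module.finrank F W = 2 ∧
      (∀ p ∈ l, e p ≤ W) ∧
      ∀ U : Submodule F V, U ≤ W → Module.finrank F U = 1 → ∃ p ∈ l, e p = U)
    (M : Submodule F V) :
    ∀ l ∈ L, ∀ p ∈ l, ∀ q ∈ l, p ≠ q → e p ≤ M → e q ≤ M → l ⊆ {r | e r ≤ M} := by
  intro l hl p hp q hq hpq hpM hqM r hr
  obtain ⟨W, hW2, hWle, -⟩ := e_lines l hl
  have hWfin : FiniteDimensional F W := Module.finite_of_finrank_pos (by omega)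
  have hrank : ∀ s : P, Module.finrank F (e s) = 1 := by
    intro s
    obtain ⟨v, hv, hev⟩ := e_rank s
    rw [hev]; exact finrank_span_singleton hv
  have hne : e p ≠ e q := fun h => hpq (e_inj h)
  have hsub : e p ⊔ e q ≤ W := sup_le (hWle p hp) (hWle q hq)
  have hfinpq : FiniteDimensional F (e p ⊔ e q : Submodule F V) :=
    Submodule.finiteDimensional_of_le hsub
  have hfinp : FiniteDimensional F (e p) := Submodule.finiteDimensional_of_le (le_sup_left.trans hsub)
  have hlt : e p < e p ⊔ e q := by
    refine lt_of_le_of_ne le_sup_left fun h => hne ?_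
    have hq' : e q ≤ e p := h ▸ le_sup_right
    exact (Submodule.eq_of_le_of_finrank_le hq' (by rw [hrank p, hrank q])).symm
  have h2le : 2 ≤ Module.finrank F (e p ⊔ e q : Submodule F V) := by
    have := Submodule.finrank_lt_finrank_of_lt hlt
    rw [hrank p] at this; omega
  have hWeq : e p ⊔ e q = W := Submodule.eq_of_le_of_finrank_le hsub (by
    rw [hW2]; exact h2le)
  have : e r ≤ W := hWle r hr
  exact (this.trans (hWeq ▸ sup_le hpM hqM))

/-- If `(e, V)` is a full projective embedding of a point-line geometry `Γ` and `H` is a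
maximal hyperplane of `Γ`, then the span of `e(H)` in `V` is either all of `V` or a linear
hyperplane of `V` (a coatom); in the latter case a point `p` lies in `H` iff `e p` is
contained in that span. -/
theorem stmt2 {P F V : Type*} [Field F] [AddCommGroup V] [Module F V]
    (L : Set (Set P))
    (partialLinear : ∀ p q : P, p ≠ q → ∀ l₁ ∈ L, ∀ l₂ ∈ L,
      p ∈ l₁ → q ∈ l₁ → p ∈ l₂ → q ∈ l₂ → l₁ = l₂)
    (lines_big : ∀ l ∈ L, ∃ p q : P, p ≠ q ∧ p ∈ l ∧ q ∈ l)
    -- full projective embedding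
    (e : P → Submodule F V)
    (e_inj : Function.Injective e)
    (e_rank : ∀ p : P, ∃ v : V, v ≠ 0 ∧ e p = Submodule.span F {v})
    (e_span : (⨆ p : P, e p) = ⊤)
    (e_lines : ∀ l ∈ L, ∃ W : Submodule F V, Module.finrank F W = 2 ∧
      (∀ p ∈ l, e p ≤ W) ∧
      ∀ U : Submodule F V, U ≤ W → Module.finrank F U = 1 → ∃ p ∈ l, e p = U)
    -- H is a hyperplane of Γ ...
    (H : Set P)
    (Hsub : ∀ l ∈ L, ∀ p ∈ l, ∀ q ∈ l, p ≠ q → p ∈ H → q ∈ H → l ⊆ H)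
    (Hproper : H ≠ Set.univ)
    (Hmeets : ∀ l ∈ L, (l ∩ H).Nonempty)
    -- ... which is a maximal proper subspace
    (Hmax : ∀ S : Set P, (∀ l ∈ L, ∀ p ∈ l, ∀ q ∈ l, p ≠ q → p ∈ S → q ∈ S → l ⊆ S) →
      H ⊆ S → S = H ∨ S = Set.univ) :
    (⨆ p ∈ H, e p) = ⊤ ∨
      (IsCoatom (⨆ p ∈ H, e p) ∧ ∀ p : P, p ∈ H ↔ e p ≤ ⨆ p ∈ H, e p) := by
  set M : Submodule F V := ⨆ p ∈ H, e p with hM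
  -- if every point's image is in a submodule N, then N = ⊤
  have top_of_all : ∀ N : Submodule F V, (∀ p : P, e p ≤ N) → N = ⊤ := by
    intro N h
    exact top_le_iff.mp (e_span ▸ iSup_le h)
  have hHle : ∀ p ∈ H, e p ≤ M := fun p hp => le_biSup e hp
  by_cases hMtop : M = ⊤
  · exact Or.inl hMtop
  right
  -- S = {p | e p ≤ M} is a subspace containing H, hence equals H
  have hSH : {p : P | e p ≤ M} = H := by
    rcases Hmax {p : P | e p ≤ M}
      (aux_closed e_inj e_rank e_lines M) (fun p hp => hHle p hp) with h | h
    · exact h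
    · exact absurd (top_of_all M fun p => (h ▸ Set.mem_univ p : p ∈ {p : P | e p ≤ M})) hMtop
  have hiff : ∀ p : P, p ∈ H ↔ e p ≤ M := fun p => by
    rw [← hSH]; exact Iff.rfl
  refine ⟨⟨hMtop, ?_⟩, hiff⟩
  -- coatom: pick p₀ ∉ H
  obtain ⟨p₀, hp₀⟩ : ∃ p : P, p ∉ H := by
    by_contra h
    push_neg at h
    exact Hproper (Set.eq_univ_of_forall h)
  have hp₀M : ¬ e p₀ ≤ M := fun h => hp₀ ((hiff p₀).mpr h)
  -- M ⊔ e p₀ = ⊤ by maximality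
  have hsuptop : M ⊔ e p₀ = ⊤ := by
    rcases Hmax {p : P | e p ≤ M ⊔ e p₀}
      (aux_closed e_inj e_rank e_lines _)
      (fun p hp => le_sup_left.trans' (hHle p hp)) with h | h
    · exact absurd (h ▸ (le_sup_right : e p₀ ≤ M ⊔ e p₀) : p₀ ∈ H) hp₀
    · exact top_of_all _ fun p => (h ▸ Set.mem_univ p : p ∈ {p : P | e p ≤ M ⊔ e p₀})
  -- conclude coatom
  intro N hMN
  obtain ⟨v, hv0, hev⟩ := e_rank p₀
  obtain ⟨w, hwN, hwM⟩ : ∃ w ∈ N, w ∉ M := by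
    rcases SetLike.exists_of_lt hMN with ⟨w, hwN, hwM⟩
    exact ⟨w, hwN, hwM⟩
  have hwtop : w ∈ M ⊔ e p₀ := hsuptop ▸ Submodule.mem_top
  rw [hev, Submodule.mem_sup] at hwtop
  obtain ⟨m, hm, x, hx, hmx⟩ := hwtop
  obtain ⟨c, rfl⟩ := Submodule.mem_span_singleton.mp hx
  have hc : c ≠ 0 := by
    rintro rfl
    simp at hmx
    exact hwM (hmx ▸ hm)
  have hvN : v ∈ N := by
    have hmN : m ∈ N := hMN.le hm
    have : c • v ∈ N := by
      have : w - m ∈ N := N.sub_mem hwN hmN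
      rwa [← hmx, add_sub_cancel_left] at this
    have := N.smul_mem c⁻¹ this
    rwa [smul_smul, inv_mul_cancel₀ hc, one_smul] at this
  have : M ⊔ e p₀ ≤ N := sup_le hMN.le (hev ▸ (Submodule.span_singleton_le_iff_mem v N).mpr hvN)
  exact top_le_iff.mp (hsuptop ▸ this)
end

section
/- Let V be a finite-dimensional vector space over a field F with a bilinear form ζ, and let 1 ≤ k ≤ dim V. Then there is a unique bilinear form ζ∧ on the k-th exterior power Λᵏ V satisfying ζ∧(u₁∧⋯∧uₖ, v₁∧⋯∧vₖ) = det(ζ(uᵢ, vⱼ)); moreover if ζ is nondegenerate then so is ζ∧, and if ζ is symmetric then so is ζ∧. -/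
/-- The pure wedge `u₁ ∧ ⋯ ∧ uₖ`, as an element of the `k`-th exterior power `⋀[F]^k V`. -/
noncomputable def wedge {F V : Type*} [Field F] [AddCommGroup V] [Module F V]
    (k : ℕ) (u : Fin k → V) : ⋀[F]^k V :=
  ⟨ExteriorAlgebra.ιMulti F k u, ExteriorAlgebra.ιMulti_range F k (Set.mem_range_self u)⟩

/-!
Viewing `ζ` as a linear map `V → V*`, the form `ζ∧` is the composite of `⋀ᵏ ζ : ⋀ᵏ V → ⋀ᵏ V*`
with the canonical pairing `⋀ᵏ V* → (⋀ᵏ V)*`, `f₁ ∧ ⋯ ∧ fₖ ↦ (v₁ ∧ ⋯ ∧ vₖ ↦ det (fⱼ vᵢ))`.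
Uniqueness holds because pure wedges span `⋀ᵏ V`; symmetry then follows from uniqueness, since
the transposed form satisfies the same identity for `ζ.flip = ζ`. If `ζ` is nondegenerate, a
basis `(eᵢ)` of `V` and its `ζ`-dual basis `(fᵢ)` with `ζ (fᵢ) (eⱼ) = δᵢⱼ` give families of
wedges indexed by `k`-subsets, on which `ζ∧` is again biorthogonal; as the first one is a basis
of `⋀ᵏ V`, `ζ∧` is nondegenerate.
-/

namespace LinearMap

namespace BilinForm

open exteriorPower
open LinearMap (BilinForm)

variable {R M : Type*} [CommRing R] [AddCommGroup M] [Module R M] {n : ℕ}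

lemma separatingLeft_of_biorthogonal {ι : Type*} [DecidableEq ι] {B : BilinForm R M}
    (e : Module.Basis ι R M) (w : ι → M) (h : ∀ i j, B (e i) (w j) = if i = j then 1 else 0) :
    B.SeparatingLeft := by
  have hcoord : ∀ j, B.flip (w j) = e.coord j := fun j =>
    e.ext fun i => by simp [h, Finsupp.single_apply]
  intro x hx
  refine e.ext_elem fun j => ?_
  rw [← e.coord_apply, ← hcoord, flip_apply, hx, map_zero, Finsupp.zero_apply]

lemma ext_exteriorPower {B B' : BilinForm R (⋀[R]^n M)}
    (h : ∀ u v, B (ιMulti R n u) (ιMulti R n v) = B' (ιMulti R n u) (ιMulti R n v)) :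
    B = B' := by
  ext u v
  exact h u v

noncomputable def exteriorPower (ζ : BilinForm R M) (n : ℕ) : BilinForm R (⋀[R]^n M) :=
  pairingDual R M n ∘ₗ map n ζ

lemma exteriorPower_ιMulti (ζ : BilinForm R M) (u v : Fin n → M) :
    ζ.exteriorPower n (ιMulti R n u) (ιMulti R n v) = (Matrix.of fun i j => ζ (u i) (v j)).det := by
  rw [exteriorPower, LinearMap.comp_apply, map_apply_ιMulti, pairingDual_ιMulti_ιMulti,
    ← Matrix.det_transpose]
  rfl

lemma IsSymm.exteriorPower {ζ : BilinForm R M} (hζ : ζ.IsSymm) (n : ℕ) :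
    (ζ.exteriorPower n).IsSymm :=
  isSymm_def.2 <| BilinMap.isSymm_iff_eq_flip.2 <| ext_exteriorPower fun u v => by
    rw [LinearMap.flip_apply, exteriorPower_ιMulti, exteriorPower_ιMulti, ← Matrix.det_transpose]
    congr 1
    ext i j
    exact hζ.eq (u j) (v i)

lemma exteriorPower_ιMulti_family {ι : Type*} [LinearOrder ι] (ζ : BilinForm R M) {x y : ι → M}
    (h : ∀ i j, ζ (x i) (y j) = if i = j then 1 else 0) (s t : Set.powersetCard ι n) :
    ζ.exteriorPower n (ιMulti_family R n x s) (ιMulti_family R n y t) = if s = t then 1 else 0 := by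
  have h₁ : ∀ i, (ζ ∘ x) i (y i) = 1 := fun i => by simp [h]
  have h₀ : ∀ ⦃i j⦄, i ≠ j → (ζ ∘ x) i (y j) = 0 := fun i j hij => by simp [h, hij]
  rw [ιMulti_family, ιMulti_family, exteriorPower, LinearMap.comp_apply, map_apply_ιMulti]
  split_ifs with hst
  · subst hst
    exact pairingDual_apply_apply_eq_one y (ζ ∘ x) h₁ h₀ n _
  · exact pairingDual_apply_apply_eq_one_zero y (ζ ∘ x) h₀ n _ _
      (Set.powersetCard.ofFinEmbEquiv.symm.injective.ne hst)

section Field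

variable {K V : Type*} [Field K] [AddCommGroup V] [Module K V] [FiniteDimensional K V]

lemma Nondegenerate.exteriorPower {ζ : BilinForm K V} (hζ : ζ.Nondegenerate) (n : ℕ) :
    (ζ.exteriorPower n).Nondegenerate := by
  classical
  let b := Module.finBasis K V
  have hdual : ∀ i j, ζ (ζ.dualBasis hζ b i) (b j) = if i = j then 1 else 0 := fun i j => by
    rw [apply_dualBasis_left]; exact if_congr eq_comm rfl rfl
  refine .ofSeparatingLeft <| separatingLeft_of_biorthogonal
    ((ζ.dualBasis hζ b).exteriorPower n) (ιMulti_family K n b) fun s t => ?_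
  rw [coe_basis]
  exact exteriorPower_ιMulti_family ζ hdual s t

end Field

end BilinForm

end LinearMap

theorem stmt6_general {F V : Type*} [Field F] [AddCommGroup V] [Module F V] [FiniteDimensional F V]
    (ζ : LinearMap.BilinForm F V) (k : ℕ) :
    (∃! B : LinearMap.BilinForm F (⋀[F]^k V),
      ∀ u v : Fin k → V,
        B (wedge k u) (wedge k v) = Matrix.det (Matrix.of fun i j => ζ (u i) (v j))) ∧
    (∀ B : LinearMap.BilinForm F (⋀[F]^k V),
      (∀ u v : Fin k → V,
        B (wedge k u) (wedge k v) = Matrix.det (Matrix.of fun i j => ζ (u i) (v j))) →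
      ζ.Nondegenerate → B.Nondegenerate) ∧
    (∀ B : LinearMap.BilinForm F (⋀[F]^k V),
      (∀ u v : Fin k → V,
        B (wedge k u) (wedge k v) = Matrix.det (Matrix.of fun i j => ζ (u i) (v j))) →
      (∀ u v : V, ζ u v = ζ v u) → ∀ x y : ⋀[F]^k V, B x y = B y x) := by
  have hζk : ∀ u v : Fin k → V, ζ.exteriorPower k (wedge k u) (wedge k v) =
      Matrix.det (Matrix.of fun i j => ζ (u i) (v j)) :=
    ζ.exteriorPower_ιMulti
  have eq_of_wedge : ∀ B : LinearMap.BilinForm F (⋀[F]^k V),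
      (∀ u v : Fin k → V,
        B (wedge k u) (wedge k v) = Matrix.det (Matrix.of fun i j => ζ (u i) (v j))) →
      B = ζ.exteriorPower k :=
    fun B hB => LinearMap.BilinForm.ext_exteriorPower fun u v => (hB u v).trans (hζk u v).symm
  refine ⟨⟨ζ.exteriorPower k, hζk, eq_of_wedge⟩, fun B hB hζ => ?_, fun B hB hsymm x y => ?_⟩
  · rw [eq_of_wedge B hB]
    exact hζ.exteriorPower k
  · rw [eq_of_wedge B hB]
    exact (LinearMap.BilinForm.isSymm_def.2 hsymm).exteriorPower k |>.eq x y

/-- For a bilinear form `ζ` on a finite-dimensional space `V` and `1 ≤ k ≤ dim V`, there is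
a unique bilinear form `ζ∧` on `⋀ᵏ V` with `ζ∧(u₁∧⋯∧uₖ, v₁∧⋯∧vₖ) = det (ζ(uᵢ, vⱼ))`;
moreover any such form is nondegenerate if `ζ` is, and symmetric if `ζ` is. -/
theorem stmt6 {F V : Type*} [Field F] [AddCommGroup V] [Module F V] [FiniteDimensional F V]
    (ζ : LinearMap.BilinForm F V) (k : ℕ) (hk1 : 1 ≤ k) (hk2 : k ≤ Module.finrank F V) :
    (∃! B : LinearMap.BilinForm F (⋀[F]^k V),
      ∀ u v : Fin k → V,
        B (wedge k u) (wedge k v) = Matrix.det (Matrix.of fun i j => ζ (u i) (v j))) ∧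
    (∀ B : LinearMap.BilinForm F (⋀[F]^k V),
      (∀ u v : Fin k → V,
        B (wedge k u) (wedge k v) = Matrix.det (Matrix.of fun i j => ζ (u i) (v j))) →
      ζ.Nondegenerate → B.Nondegenerate) ∧
    (∀ B : LinearMap.BilinForm F (⋀[F]^k V),
      (∀ u v : Fin k → V,
        B (wedge k u) (wedge k v) = Matrix.det (Matrix.of fun i j => ζ (u i) (v j))) →
      (∀ u v : V, ζ u v = ζ v u) → ∀ x y : ⋀[F]^k V, B x y = B y x) :=
  stmt6_general ζ k
end
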